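/- Assume that for every ε₀ > 0 both (1/915 + ε₀, 1 − 10/915 + ε₀) and (13/84 + ε₀, 13/84 + 1/2 + ε₀) are exponent pairs. Then for every ε > 0 there exist δ > 0, J ∈ ℕ and C > 0 such that the following holds: for every real t ≥ 2, every integer N with 1 ≤ N ≤ t^{1/2}, and every smooth function f : [1, 2N] → ℝ satisfying |f^{(j+1)}(x) − t^{1/3}·(d^j/dx^j)(x^{−1/3})| ≤ δ·t^{1/3}·|(d^j/dx^j)(x^{−1/3})| for all x ∈ [1, 2N] and all integers 0 ≤ j ≤ J, one has N^{−2/3}·|∑_{k=1}^{N} exp(i·f(k))| ≤ C·t^{959/22224 + ε}. In particular, since 959/22224 < 1/23, the left-hand side is bounded by a constant times t^{1/23}. -/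

import Mathlib

open Finset

/-- `(p, q)` is an exponent pair: for every `σ > 0` there are `δ > 0`, `J ∈ ℕ`, `C > 0`
such that for all `N ≤ N' ≤ 2N`, `T ≥ N^σ`, and every smooth `f` on `[N, 2N]` whose
derivatives up to order `J+1` are `δ`-close to those of the model phase `T x^{−σ}`,
one has `|∑_{n=N}^{N'} e^{i f(n)}| ≤ C (T N^{−σ})^p N^q`. -/
def IsExponentPair (p q : ℝ) : Prop :=
  ∀ σ : ℝ, 0 < σ →
    ∃ δ : ℝ, 0 < δ ∧ ∃ J : ℕ, ∃ C : ℝ, 0 < C ∧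
      ∀ N N' : ℕ, 1 ≤ N → N ≤ N' → N' ≤ 2 * N →
      ∀ T : ℝ, (N : ℝ) ^ σ ≤ T →
      ∀ f : ℝ → ℝ, ContDiffOn ℝ (⊤ : ℕ∞) f (Set.Icc (N : ℝ) (2 * (N : ℝ))) →
      (∀ x ∈ Set.Icc (N : ℝ) (2 * (N : ℝ)), ∀ j : ℕ, j ≤ J →
        |iteratedDerivWithin (j + 1) f (Set.Icc (N : ℝ) (2 * (N : ℝ))) x
            - T * iteratedDeriv j (fun y : ℝ => y ^ (-σ)) x|
          ≤ δ * T * |iteratedDeriv j (fun y : ℝ => y ^ (-σ)) x|) →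
      ‖∑ n ∈ Finset.Icc N N', Complex.exp (Complex.I * ((f (n : ℝ) : ℝ) : ℂ))‖
        ≤ C * (T / (N : ℝ) ^ σ) ^ p * (N : ℝ) ^ q

/-!
Cut `[1, N]` into the dyadic blocks `[2^i, 2^(i+1))`. On each block an exponent pair `(p, q)`
with `σ = 1/3`, `T = t^(1/3)` bounds the sum by `C t^(p/3) N^(q - p/3)`, and the `O(log N)`
blocks cost a factor `N^η`, so `N^(-2/3) |∑| ≪ t^(p/3) N^(q - p/3 - 2/3 + η)`. The exponent
of `N` is positive for Bourgain's pair and negative for `(13/84, 13/84 + 1/2)`; using the first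
for `N ≤ t^(3937/29632)` and the second beyond, both give `t^(959/22224 + ε)`.
-/

def IsModelPhase (δ : ℝ) (J : ℕ) (T σ : ℝ) (f : ℝ → ℝ) (s : Set ℝ) : Prop :=
  ∀ x ∈ s, ∀ j : ℕ, j ≤ J →
    |iteratedDerivWithin (j + 1) f s x - T * iteratedDeriv j (fun y : ℝ => y ^ (-σ)) x|
      ≤ δ * T * |iteratedDeriv j (fun y : ℝ => y ^ (-σ)) x|

namespace IsModelPhase

variable {δ δ' T σ : ℝ} {J J' : ℕ} {f : ℝ → ℝ} {s u : Set ℝ}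

theorem mono (h : IsModelPhase δ J T σ f s) (hδ : δ ≤ δ') (hJ : J' ≤ J) (hT : 0 ≤ T) :
    IsModelPhase δ' J' T σ f s := fun x hx j hj =>
  (h x hx j (hj.trans hJ)).trans <| by gcongr

theorem of_subset (h : IsModelPhase δ J T σ f u) (hf : ContDiffOn ℝ (⊤ : ℕ∞) f u)
    (hsu : s ⊆ u) (hs : UniqueDiffOn ℝ s) (hu : UniqueDiffOn ℝ u) :
    IsModelPhase δ J T σ f s := by
  intro x hx j hj
  have hderiv : iteratedDerivWithin (j + 1) f s x = iteratedDerivWithin (j + 1) f u x := by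
    simp only [iteratedDerivWithin_eq_iteratedFDerivWithin]
    rw [iteratedFDerivWithin_subset hsu hs hu (hf.of_le (by exact_mod_cast le_top)) hx]
  rw [hderiv]
  exact h x (hsu hx) j hj

end IsModelPhase

theorem Nat.filter_log_two_eq_Icc (N i : ℕ) :
    {k ∈ Icc 1 N | Nat.log 2 k = i} = Icc (2 ^ i) (min (2 ^ (i + 1) - 1) N) := by
  ext k
  simp only [mem_filter, mem_Icc, le_min_iff]
  constructor
  · rintro ⟨⟨hk1, hkN⟩, rfl⟩
    have := Nat.lt_pow_succ_log_self (b := 2) (by norm_num) k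
    exact ⟨Nat.pow_log_le_self 2 (by omega), by omega, hkN⟩
  · rintro ⟨hik, hk, hkN⟩
    have : 1 ≤ 2 ^ i := Nat.one_le_two_pow
    exact ⟨⟨by omega, hkN⟩, (Nat.log_eq_iff (by omega)).2 ⟨hik, by omega⟩⟩

theorem norm_sum_Icc_one_le_of_dyadic {E : Type*} [SeminormedAddCommGroup E] (g : ℕ → E)
    (N : ℕ) (B : ℝ)
    (hB : ∀ i ≤ Nat.log 2 N, ‖∑ k ∈ Icc (2 ^ i) (min (2 ^ (i + 1) - 1) N), g k‖ ≤ B) :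
    ‖∑ k ∈ Icc 1 N, g k‖ ≤ (Nat.log 2 N + 1) * B := by
  have hmaps : ∀ k ∈ Icc 1 N, Nat.log 2 k ∈ range (Nat.log 2 N + 1) := fun k hk =>
    mem_range_succ_iff.2 (Nat.log_mono_right (mem_Icc.1 hk).2)
  rw [← sum_fiberwise_of_maps_to hmaps]
  calc ‖∑ i ∈ range (Nat.log 2 N + 1), ∑ k ∈ Icc 1 N with Nat.log 2 k = i, g k‖
      ≤ ∑ i ∈ range (Nat.log 2 N + 1), ‖∑ k ∈ Icc 1 N with Nat.log 2 k = i, g k‖ :=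
        norm_sum_le _ _
    _ ≤ ∑ _i ∈ range (Nat.log 2 N + 1), B := by
        refine sum_le_sum fun i hi => ?_
        rw [Nat.filter_log_two_eq_Icc]
        exact hB i (mem_range_succ_iff.1 hi)
    _ = (Nat.log 2 N + 1) * B := by simp

theorem Nat.log_two_add_one_le_rpow {N : ℕ} (hN : 1 ≤ N) {η : ℝ} (hη : 0 < η) :
    (Nat.log 2 N : ℝ) + 1 ≤ (2 / η + 1) * (N : ℝ) ^ η := by
  have hN₁ : (1 : ℝ) ≤ N := by exact_mod_cast hN
  have hlog : (Nat.log 2 N : ℝ) ≤ 2 * Real.log N := by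
    have hlog2 : (1 / 2 : ℝ) < Real.log 2 := by linarith [Real.log_two_gt_d9]
    have := Real.natLog_le_logb N 2
    rw [Nat.cast_ofNat, Real.logb, le_div_iff₀ (by linarith)] at this
    nlinarith [Real.log_nonneg hN₁, (Nat.cast_nonneg _ : (0 : ℝ) ≤ Nat.log 2 N)]
  have hrpow : Real.log N ≤ (N : ℝ) ^ η / η := Real.log_le_rpow_div (by positivity) hη
  have hone : (1 : ℝ) ≤ (N : ℝ) ^ η := Real.one_le_rpow hN₁ hη.le
  calc (Nat.log 2 N : ℝ) + 1 ≤ 2 * ((N : ℝ) ^ η / η) + (N : ℝ) ^ η := by linarith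
    _ = (2 / η + 1) * (N : ℝ) ^ η := by ring

theorem Real.mul_div_rpow_rpow_mul_rpow_le {C T M N σ p q : ℝ} (hC : 0 ≤ C) (hT : 0 ≤ T)
    (hM : 0 < M) (hMN : M ≤ N) (hpq : σ * p ≤ q) :
    C * (T / M ^ σ) ^ p * M ^ q ≤ C * T ^ p * N ^ (q - σ * p) := by
  have hsplit : C * (T / M ^ σ) ^ p * M ^ q = C * T ^ p * M ^ (q - σ * p) := by
    rw [Real.div_rpow hT (Real.rpow_nonneg hM.le _), ← Real.rpow_mul hM.le,
      Real.rpow_sub hM]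
    ring
  rw [hsplit]
  gcongr

theorem Real.rpow_mul_rpow_le_of_le_rpow {t N a b c E : ℝ} (ht : 1 ≤ t) (hN : 0 ≤ N)
    (hNt : N ≤ t ^ c) (hb : 0 ≤ b) (hE : a + c * b ≤ E) : t ^ a * N ^ b ≤ t ^ E :=
  calc t ^ a * N ^ b ≤ t ^ a * (t ^ c) ^ b := by gcongr
    _ = t ^ (a + c * b) := by
        rw [← Real.rpow_mul (by linarith), Real.rpow_add (by linarith)]
    _ ≤ t ^ E := Real.rpow_le_rpow_of_exponent_le ht hE

theorem Real.rpow_mul_rpow_le_of_rpow_le {t N a b c E : ℝ} (ht : 1 ≤ t)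
    (hNt : t ^ c ≤ N) (hb : b ≤ 0) (hE : a + c * b ≤ E) : t ^ a * N ^ b ≤ t ^ E :=
  calc t ^ a * N ^ b ≤ t ^ a * (t ^ c) ^ b := by
        gcongr t ^ a * ?_
        exact Real.rpow_le_rpow_of_nonpos (Real.rpow_pos_of_pos (by linarith) c) hNt hb
    _ = t ^ (a + c * b) := by
        rw [← Real.rpow_mul (by linarith), Real.rpow_add (by linarith)]
    _ ≤ t ^ E := Real.rpow_le_rpow_of_exponent_le ht hE

namespace IsExponentPair

variable {p q : ℝ}

theorem exists_norm_sum_Icc_one_le (h : IsExponentPair p q) {σ η : ℝ} (hσ : 0 < σ)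
    (hpq : σ * p ≤ q) (hη : 0 < η) :
    ∃ δ : ℝ, 0 < δ ∧ ∃ J : ℕ, ∃ C : ℝ, 0 < C ∧
      ∀ N : ℕ, 1 ≤ N → ∀ T : ℝ, (N : ℝ) ^ σ ≤ T →
      ∀ f : ℝ → ℝ, ContDiffOn ℝ (⊤ : ℕ∞) f (Set.Icc 1 (2 * (N : ℝ))) →
      IsModelPhase δ J T σ f (Set.Icc 1 (2 * (N : ℝ))) →
      ‖∑ k ∈ Icc 1 N, Complex.exp (Complex.I * ((f (k : ℝ) : ℝ) : ℂ))‖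
        ≤ C * T ^ p * (N : ℝ) ^ (q - σ * p + η) := by
  obtain ⟨δ, hδ, J, C, hC, H⟩ := h σ hσ
  refine ⟨δ, hδ, J, (2 / η + 1) * C, by positivity, ?_⟩
  intro N hN T hNT f hf hfT
  have hN₁ : (1 : ℝ) ≤ N := by exact_mod_cast hN
  have hT : 0 ≤ T := (Real.rpow_nonneg (by positivity) σ).trans hNT
  have hblock : ∀ i ≤ Nat.log 2 N,
      ‖∑ k ∈ Icc (2 ^ i) (min (2 ^ (i + 1) - 1) N),
          Complex.exp (Complex.I * ((f (k : ℝ) : ℝ) : ℂ))‖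
        ≤ C * T ^ p * (N : ℝ) ^ (q - σ * p) := by
    intro i hi
    set M : ℕ := 2 ^ i
    have hM₁ : 1 ≤ M := Nat.one_le_two_pow
    have hMN : M ≤ N :=
      (Nat.pow_le_pow_right two_pos hi).trans (Nat.pow_log_le_self 2 (by omega))
    have hMNr : (M : ℝ) ≤ N := by exact_mod_cast hMN
    have hM₁r : (1 : ℝ) ≤ M := by exact_mod_cast hM₁
    have hsub : Set.Icc (M : ℝ) (2 * M) ⊆ Set.Icc 1 (2 * (N : ℝ)) :=
      Set.Icc_subset_Icc hM₁r (by linarith)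
    have hphase : IsModelPhase δ J T σ f (Set.Icc (M : ℝ) (2 * M)) :=
      hfT.of_subset hf hsub (uniqueDiffOn_Icc (by linarith)) (uniqueDiffOn_Icc (by linarith))
    refine (H M _ hM₁ (le_min (by omega) hMN) (by omega) T
      ((Real.rpow_le_rpow (by positivity) hMNr hσ.le).trans hNT) f (hf.mono hsub) hphase).trans ?_
    exact Real.mul_div_rpow_rpow_mul_rpow_le hC.le hT (by positivity) hMNr hpq
  calc _ ≤ (Nat.log 2 N + 1) * (C * T ^ p * (N : ℝ) ^ (q - σ * p)) :=
        norm_sum_Icc_one_le_of_dyadic _ N _ hblock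
    _ ≤ ((2 / η + 1) * (N : ℝ) ^ η) * (C * T ^ p * (N : ℝ) ^ (q - σ * p)) := by
        gcongr
        exact Nat.log_two_add_one_le_rpow hN hη
    _ = (2 / η + 1) * C * T ^ p * (N : ℝ) ^ (q - σ * p + η) := by
        rw [Real.rpow_add (by positivity)]
        ring

theorem exists_rpow_neg_two_thirds_mul_norm_sum_le (h : IsExponentPair p q) (hpq : p / 3 ≤ q)
    {η : ℝ} (hη : 0 < η) :
    ∃ δ : ℝ, 0 < δ ∧ ∃ J : ℕ, ∃ C : ℝ, 0 < C ∧
      ∀ t : ℝ, 0 ≤ t → ∀ N : ℕ, 1 ≤ N → (N : ℝ) ≤ t →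
      ∀ f : ℝ → ℝ, ContDiffOn ℝ (⊤ : ℕ∞) f (Set.Icc 1 (2 * (N : ℝ))) →
      IsModelPhase δ J (t ^ (1 / 3 : ℝ)) (1 / 3) f (Set.Icc 1 (2 * (N : ℝ))) →
      (N : ℝ) ^ (-(2 / 3 : ℝ)) *
          ‖∑ k ∈ Icc 1 N, Complex.exp (Complex.I * ((f (k : ℝ) : ℝ) : ℂ))‖
        ≤ C * (t ^ (p / 3) * (N : ℝ) ^ (q - p / 3 + η - 2 / 3)) := by
  obtain ⟨δ, hδ, J, C, hC, H⟩ :=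
    h.exists_norm_sum_Icc_one_le (σ := 1 / 3) (by norm_num) (by linarith) hη
  refine ⟨δ, hδ, J, C, hC, fun t ht N hN hNt f hf hfT => ?_⟩
  have hN₀ : (0 : ℝ) < N := by positivity
  have hT : (N : ℝ) ^ (1 / 3 : ℝ) ≤ t ^ (1 / 3 : ℝ) := by gcongr
  calc _ ≤ (N : ℝ) ^ (-(2 / 3 : ℝ)) *
          (C * (t ^ (1 / 3 : ℝ)) ^ p * (N : ℝ) ^ (q - 1 / 3 * p + η)) :=
        mul_le_mul_of_nonneg_left (H N hN _ hT f hf hfT) (by positivity)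
    _ = C * (t ^ (p / 3) * (N : ℝ) ^ (q - p / 3 + η - 2 / 3)) := by
        rw [← Real.rpow_mul ht, sub_eq_add_neg _ (2 / 3 : ℝ), Real.rpow_add hN₀ _ (-(2 / 3))]
        ring_nf

end IsExponentPair

/-- Unconditional exponential-sum bound using the known exponent pairs
`(1/915 + ε₀, 1 − 10/915 + ε₀)` and `(13/84 + ε₀, 13/84 + 1/2 + ε₀)`:
`N^{−2/3} |∑_{k=1}^N e^{i f(k)}| ≲ t^{959/22224 + ε}` for phases modelled on
`t^{1/3} x^{−1/3}` and `N ≤ t^{1/2}`. -/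
theorem statement19
    (hp1 : ∀ ε₀ : ℝ, 0 < ε₀ → IsExponentPair (1 / 915 + ε₀) (1 - 10 / 915 + ε₀))
    (hp2 : ∀ ε₀ : ℝ, 0 < ε₀ → IsExponentPair (13 / 84 + ε₀) (13 / 84 + 1 / 2 + ε₀)) :
    ∀ ε : ℝ, 0 < ε →
    ∃ δ : ℝ, 0 < δ ∧ ∃ J : ℕ, ∃ C : ℝ, 0 < C ∧
    ∀ t : ℝ, 2 ≤ t → ∀ N : ℕ, 1 ≤ N → (N : ℝ) ≤ t ^ ((1 : ℝ) / 2) →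
    ∀ f : ℝ → ℝ, ContDiffOn ℝ (⊤ : ℕ∞) f (Set.Icc (1 : ℝ) (2 * (N : ℝ))) →
    (∀ x ∈ Set.Icc (1 : ℝ) (2 * (N : ℝ)), ∀ j : ℕ, j ≤ J →
      |iteratedDerivWithin (j + 1) f (Set.Icc (1 : ℝ) (2 * (N : ℝ))) x
          - t ^ ((1 : ℝ) / 3) * iteratedDeriv j (fun y : ℝ => y ^ (-(1 / 3 : ℝ))) x|
        ≤ δ * t ^ ((1 : ℝ) / 3) * |iteratedDeriv j (fun y : ℝ => y ^ (-(1 / 3 : ℝ))) x|) →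
    (N : ℝ) ^ (-(2 / 3 : ℝ)) *
        ‖∑ k ∈ Finset.Icc 1 N, Complex.exp (Complex.I * ((f (k : ℝ) : ℝ) : ℂ))‖
      ≤ C * t ^ (959 / 22224 + ε) := by
  intro ε hε
  -- `ε₀ ≤ 1/100` keeps the exponent of `N` from the second pair negative.
  set ε₀ : ℝ := min (ε / 2) (1 / 100)
  have hε₀ : 0 < ε₀ := lt_min (by linarith) (by norm_num)
  have hε₀ε : ε₀ ≤ ε / 2 := min_le_left _ _
  have hε₀small : ε₀ ≤ 1 / 100 := min_le_right _ _
  obtain ⟨δ₁, hδ₁, J₁, C₁, hC₁, H₁⟩ :=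
    (hp1 ε₀ hε₀).exists_rpow_neg_two_thirds_mul_norm_sum_le (by linarith) hε₀
  obtain ⟨δ₂, hδ₂, J₂, C₂, hC₂, H₂⟩ :=
    (hp2 ε₀ hε₀).exists_rpow_neg_two_thirds_mul_norm_sum_le (by linarith) hε₀
  refine ⟨min δ₁ δ₂, lt_min hδ₁ hδ₂, max J₁ J₂, C₁ + C₂, by positivity, ?_⟩
  intro t ht N hN hNt f hf hfd
  have ht₁ : 1 ≤ t := by linarith
  have hNt' : (N : ℝ) ≤ t :=
    hNt.trans ((Real.rpow_le_rpow_of_exponent_le ht₁ (by norm_num : (1 : ℝ) / 2 ≤ 1)).trans_eq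
      (Real.rpow_one t))
  have hphase : IsModelPhase (min δ₁ δ₂) (max J₁ J₂) (t ^ (1 / 3 : ℝ)) (1 / 3) f
      (Set.Icc 1 (2 * (N : ℝ))) := hfd
  have hT : 0 ≤ t ^ (1 / 3 : ℝ) := by positivity
  -- `3937/29632` is where the bounds from the two pairs coincide.
  rcases le_or_gt (N : ℝ) (t ^ (3937 / 29632 : ℝ)) with hsmall | hlarge
  · calc _ ≤ C₁ * (t ^ _ * (N : ℝ) ^ _) := H₁ t (by positivity) N hN hNt' f hf
          (hphase.mono (min_le_left _ _) (le_max_left _ _) hT)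
      _ ≤ C₁ * t ^ (959 / 22224 + ε) := by
          gcongr
          exact Real.rpow_mul_rpow_le_of_le_rpow ht₁ (by positivity) hsmall (by linarith)
            (by linarith)
      _ ≤ (C₁ + C₂) * t ^ (959 / 22224 + ε) := by gcongr; linarith
  · calc _ ≤ C₂ * (t ^ _ * (N : ℝ) ^ _) := H₂ t (by positivity) N hN hNt' f hf
          (hphase.mono (min_le_right _ _) (le_max_right _ _) hT)
      _ ≤ C₂ * t ^ (959 / 22224 + ε) := by
          gcongr
          exact Real.rpow_mul_rpow_le_of_rpow_le ht₁ hlarge.le (by linarith) (by linarith)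
      _ ≤ (C₁ + C₂) * t ^ (959 / 22224 + ε) := by gcongr; linarith
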